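/- arXiv:1604.06206 — 9 statements merged into one kernel-verified Lean document; each statement's English description precedes it below -/
import Mathlib

section
/- Let b ≥ 1 and a > 0 be real numbers, let N ∈ ℕ, let w = (w₁,…,w_N) be a real vector with Σᵢ wᵢ² = a, and let d, e be nonnegative integers with d + be > 0 and let m = (m₁,…,m_N) be nonnegative integers with Σᵢ mᵢ² = 2de+1. Set μ := (Σᵢ mᵢwᵢ)/(d+be), h := d − be, and define the error vector ε by εᵢ := mᵢ − ((d+be)/√(2ba))·wᵢ. Then: (i) μ > √(a/(2b)) if and only if Σᵢ εᵢwᵢ > 0; (ii) if μ > √(a/(2b)), then Σᵢ εᵢ² < 1 − h²/(2b), and in particular |h| < √(2b). -/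
/-!
Write `s = d + be` and `c = s/√(2ba)`. Since `Σ wᵢ² = a`, the sums in the statement are
`Σ εᵢwᵢ = ⟨m, w⟩ - c a` and `Σ εᵢ² = |m|² - 2c⟨m, w⟩ + c² a`, with `c² a = s²/(2b)`.
Part (i) is then a rearrangement of `⟨m, w⟩/s > a/√(2ba) = √(a/(2b))`. Under (i) we have
`c⟨m, w⟩ > c² a`, so `Σ εᵢ² < |m|² - c² a = 2de + 1 - (d + be)²/(2b) = 1 - (d - be)²/(2b)`;
as `Σ εᵢ² ≥ 0`, this forces `h² < 2b`.
-/

open Finset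

section ErrorVector

variable {ι : Type*} [Fintype ι]

lemma sum_sub_mul_mul (m w : ι → ℝ) (c : ℝ) :
    ∑ i, (m i - c * w i) * w i = ∑ i, m i * w i - c * ∑ i, w i ^ 2 := by
  simp only [sub_mul, sum_sub_distrib, mul_sum]
  ring_nf

lemma sum_sub_mul_sq (m w : ι → ℝ) (c : ℝ) :
    ∑ i, (m i - c * w i) ^ 2
      = ∑ i, m i ^ 2 - 2 * c * ∑ i, m i * w i + c ^ 2 * ∑ i, w i ^ 2 := by
  simp only [mul_sum, ← sum_sub_distrib, ← sum_add_distrib]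
  exact sum_congr rfl fun i _ => by ring

end ErrorVector

lemma Real.sqrt_div_eq_div_sqrt_mul {x : ℝ} (hx : 0 ≤ x) (y : ℝ) :
    √(x / y) = x / √(y * x) := by
  rw [Real.sqrt_div hx, Real.sqrt_mul' _ hx, div_mul_eq_div_div_swap, Real.div_sqrt]

lemma Real.sqrt_div_lt_div_iff {a b s M : ℝ} (ha : 0 < a) (hb : 0 < b) (hs : 0 < s) :
    √(a / b) < M / s ↔ s / √(b * a) * a < M := by
  have hr : 0 < √(b * a) := Real.sqrt_pos.2 (mul_pos hb ha)
  rw [Real.sqrt_div_eq_div_sqrt_mul ha.le, div_lt_div_iff₀ hr hs, div_mul_eq_mul_div,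
    div_lt_iff₀ hr, mul_comm a s]

lemma div_sqrt_mul_sq_mul {a b : ℝ} (ha : 0 < a) (hb : 0 ≤ b) (s : ℝ) :
    (s / √(b * a)) ^ 2 * a = s ^ 2 / b := by
  rw [div_pow, Real.sq_sqrt (mul_nonneg hb ha.le)]
  field_simp

lemma two_mul_mul_add_one_sub_sq_div {b : ℝ} (hb : b ≠ 0) (d e : ℝ) :
    2 * d * e + 1 - (d + b * e) ^ 2 / (2 * b) = 1 - (d - b * e) ^ 2 / (2 * b) := by
  field_simp
  ring

/-- Let `b ≥ 1`, `a > 0`, `w : Fin N → ℝ` with `Σ wᵢ² = a`, and let `d, e, m` be nonnegative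
integers with `d + be > 0` and `Σ mᵢ² = 2de+1`. With `μ = (Σ mᵢwᵢ)/(d+be)`, `h = d − be` and
`εᵢ = mᵢ − ((d+be)/√(2ba))·wᵢ`, we have:
(i) `μ > √(a/(2b))` iff `Σ εᵢwᵢ > 0`;
(ii) if `μ > √(a/(2b))` then `Σ εᵢ² < 1 − h²/(2b)` and `|h| < √(2b)`. -/
theorem stmt7 (b a : ℝ) (hb : 1 ≤ b) (ha : 0 < a) (N : ℕ) (w : Fin N → ℝ)
    (hw : ∑ i, (w i) ^ 2 = a) (d e : ℕ) (hde : 0 < (d : ℝ) + b * e)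
    (m : Fin N → ℕ) (hm : ∑ i, ((m i : ℝ)) ^ 2 = 2 * d * e + 1) :
    ((∑ i, (m i : ℝ) * w i) / ((d : ℝ) + b * e) > Real.sqrt (a / (2 * b)) ↔
      (∑ i, ((m i : ℝ) - (((d : ℝ) + b * e) / Real.sqrt (2 * b * a)) * w i) * w i) > 0) ∧
    ((∑ i, (m i : ℝ) * w i) / ((d : ℝ) + b * e) > Real.sqrt (a / (2 * b)) →
      (∑ i, ((m i : ℝ) - (((d : ℝ) + b * e) / Real.sqrt (2 * b * a)) * w i) ^ 2)
          < 1 - ((d : ℝ) - b * e) ^ 2 / (2 * b) ∧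
        |(d : ℝ) - b * e| < Real.sqrt (2 * b)) := by
  have hb0 : 0 < b := by linarith
  have h2b : 0 < 2 * b := by linarith
  set c := ((d : ℝ) + b * e) / √(2 * b * a)
  have hc : 0 < c := div_pos hde (Real.sqrt_pos.2 (mul_pos h2b ha))
  rw [gt_iff_lt, Real.sqrt_div_lt_div_iff ha h2b hde, sum_sub_mul_mul, hw, gt_iff_lt, sub_pos]
  refine ⟨Iff.rfl, fun hM => ?_⟩
  have hε : ∑ i, ((m i : ℝ) - c * w i) ^ 2 < 1 - ((d : ℝ) - b * e) ^ 2 / (2 * b) := by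
    rw [sum_sub_mul_sq, hm, hw, ← two_mul_mul_add_one_sub_sq_div hb0.ne' d e,
      ← div_sqrt_mul_sq_mul ha h2b.le]
    linarith [mul_lt_mul_of_pos_left hM hc]
  have hh : ((d : ℝ) - b * e) ^ 2 / (2 * b) < 1 :=
    sub_pos.1 ((sum_nonneg fun i _ => sq_nonneg ((m i : ℝ) - c * w i)).trans_lt hε)
  rw [div_lt_one h2b] at hh
  exact ⟨hε, (Real.lt_sqrt (abs_nonneg _)).2 (by rwa [sq_abs])⟩
end

section
/- Let n̄ ≥ 2 be an integer and ε a real number with −1/2 < ε ≤ 1/2, and set b := n̄ + ε. Then (2n̄²+4n̄+1)/((2n̄+ε)(n̄+1)) > √((n̄+2)/(n̄+ε)) if and only if −n̄/(n̄+1)² < ε < 1/(n̄+2). (This is the condition that the obstruction of the class F_{n̄} at a = 2n̄+4 exceeds the volume constraint √((2n̄+4)/(2b)).) -/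
/-!
Both sides are positive, so the inequality may be squared and cleared of denominators. The
difference `(2n²+4n+1)²(n+ε) − (n+2)((2n+ε)(n+1))²` factors as
`((n+1)²ε + n)(1 − (n+2)ε)`: a product of an increasing and a decreasing affine function of `ε`
with roots `−n/(n+1)² < 0 < 1/(n+2)`, hence positive exactly between the two roots.
-/

lemma Real.sqrt_div_lt_div_iff_s9 {p q N D : ℝ} (hq : 0 < q) (hN : 0 < N) (hD : 0 < D) :
    √(p / q) < N / D ↔ p * D ^ 2 < N ^ 2 * q := by
  rw [Real.sqrt_lt' (div_pos hN hD), div_pow, div_lt_div_iff₀ hq (pow_pos hD 2)]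

lemma obstruction_sq_sub_volume_sq_eq (x ε : ℝ) :
    (2 * x ^ 2 + 4 * x + 1) ^ 2 * (x + ε) - (x + 2) * ((2 * x + ε) * (x + 1)) ^ 2
      = ((x + 1) ^ 2 * ε + x) * (1 - (x + 2) * ε) := by
  ring

lemma mul_factors_pos_iff {x ε : ℝ} (hx : 0 < x) :
    0 < ((x + 1) ^ 2 * ε + x) * (1 - (x + 2) * ε) ↔
      -x / (x + 1) ^ 2 < ε ∧ ε < 1 / (x + 2) := by
  have hlow : 0 < (x + 1) ^ 2 * ε + x ↔ -x / (x + 1) ^ 2 < ε := by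
    rw [div_lt_iff₀ (by positivity)]
    constructor <;> intro h <;> linarith
  have hhigh : 0 < 1 - (x + 2) * ε ↔ ε < 1 / (x + 2) := by
    rw [lt_div_iff₀ (by linarith)]
    constructor <;> intro h <;> linarith
  rw [mul_pos_iff, hlow, hhigh, or_iff_left]
  rintro ⟨hA, hB⟩
  have hε_neg : ε < 0 := by nlinarith
  nlinarith

theorem stmt9_general (n : ℤ) (hn : 2 ≤ n) (ε : ℝ) (hε1 : -(1/2 : ℝ) < ε) :
    (2 * (n : ℝ) ^ 2 + 4 * n + 1) / ((2 * (n : ℝ) + ε) * ((n : ℝ) + 1))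
        > Real.sqrt (((n : ℝ) + 2) / ((n : ℝ) + ε)) ↔
      (-(n : ℝ) / ((n : ℝ) + 1) ^ 2 < ε ∧ ε < 1 / ((n : ℝ) + 2)) := by
  have hx : (2 : ℝ) ≤ n := by exact_mod_cast hn
  have hN : 0 < 2 * (n : ℝ) ^ 2 + 4 * n + 1 := by positivity
  have hD : 0 < (2 * (n : ℝ) + ε) * ((n : ℝ) + 1) := mul_pos (by linarith) (by linarith)
  rw [gt_iff_lt, Real.sqrt_div_lt_div_iff_s9 (by linarith) hN hD, ← sub_pos,
    obstruction_sq_sub_volume_sq_eq, mul_factors_pos_iff (by linarith)]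

/-- Let `n̄ ≥ 2` be an integer, `ε` real with `−1/2 < ε ≤ 1/2`, and `b = n̄ + ε`. Then
`(2n̄²+4n̄+1)/((2n̄+ε)(n̄+1)) > √((n̄+2)/(n̄+ε))` iff `−n̄/(n̄+1)² < ε < 1/(n̄+2)`. -/
theorem stmt9 (n : ℤ) (hn : 2 ≤ n) (ε : ℝ) (hε1 : -(1/2 : ℝ) < ε) (hε2 : ε ≤ 1/2) :
    (2 * (n : ℝ) ^ 2 + 4 * n + 1) / ((2 * (n : ℝ) + ε) * ((n : ℝ) + 1))
        > Real.sqrt (((n : ℝ) + 2) / ((n : ℝ) + ε)) ↔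
      (-(n : ℝ) / ((n : ℝ) + 1) ^ 2 < ε ∧ ε < 1 / ((n : ℝ) + 2)) :=
  stmt9_general n hn ε hε1
end

section
/- Let b ≥ 2 be an integer and set v_b⁺ := 2b·((2b + 2⌊√(2b)⌋ + 1)/(2b + ⌊√(2b)⌋))². Then L(b, 3) := (2(3b + √(2b) + 3) − 1)/(6b + √(2b)) ≤ √(v_b⁺/(2b)) = (2b + 2⌊√(2b)⌋ + 1)/(2b + ⌊√(2b)⌋). -/
/-!
Write `s = √(2b)` and `f = ⌊s⌋`, so that `2b = s²`, `f ≥ 2` and `s = f + t` with `0 ≤ t ≤ 1`. After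
clearing denominators the inequality `L(b, 3) ≤ (s² + 2f + 1)/(s² + f)` becomes the polynomial
inequality `2f(f - 2)(f + 1) + t((3f - 1)(f - 1) - t(t + 2)) ≥ 0`, whose two summands are nonnegative
because `f ≥ 2` and `t ≤ 1`. Equality holds at `s = f = 2`, i.e. `b = 2`.
-/

lemma cross_mul_le_of_le_of_le_add_one {s f : ℝ} (hf : 2 ≤ f) (hfs : f ≤ s) (hsf : s ≤ f + 1) :
    (3 * s ^ 2 + 2 * s + 5) * (s ^ 2 + f) ≤ (s ^ 2 + 2 * f + 1) * (3 * s ^ 2 + s) := by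
  have ht0 : 0 ≤ s - f := sub_nonneg.2 hfs
  have hquad : (s - f) * (s - f + 2) ≤ (3 * f - 1) * (f - 1) := by nlinarith
  have hdiff : (s ^ 2 + 2 * f + 1) * (3 * s ^ 2 + s) - (3 * s ^ 2 + 2 * s + 5) * (s ^ 2 + f)
      = 2 * f * (f - 2) * (f + 1) + (s - f) * ((3 * f - 1) * (f - 1) - (s - f) * (s - f + 2)) := by
    ring
  rw [← sub_nonneg, hdiff]
  have hf0 : 0 ≤ f := by linarith
  exact add_nonneg (mul_nonneg (mul_nonneg (by positivity) (sub_nonneg.2 hf)) (by positivity))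
    (mul_nonneg ht0 (sub_nonneg.2 hquad))

lemma div_le_floor_div {s : ℝ} (hs : 2 ≤ s) :
    (3 * s ^ 2 + 2 * s + 5) / (3 * s ^ 2 + s) ≤ (s ^ 2 + 2 * ⌊s⌋ + 1) / (s ^ 2 + ⌊s⌋) := by
  have hf : (2 : ℝ) ≤ ⌊s⌋ := by exact_mod_cast Int.le_floor.2 (by exact_mod_cast hs)
  rw [div_le_div_iff₀ (by positivity) (by positivity)]
  exact cross_mul_le_of_le_of_le_add_one hf (Int.floor_le s) (Int.lt_floor_add_one s).le

/-- For an integer `b ≥ 2`, with `v_b⁺ = 2b·((2b+2⌊√(2b)⌋+1)/(2b+⌊√(2b)⌋))²`, we have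
`L(b,3) = (2(3b+√(2b)+3)−1)/(6b+√(2b)) ≤ √(v_b⁺/(2b)) = (2b+2⌊√(2b)⌋+1)/(2b+⌊√(2b)⌋)`. -/
theorem stmt11 (b : ℤ) (hb : 2 ≤ b) :
    (2 * (3 * (b : ℝ) + Real.sqrt (2 * b) + 3) - 1) / (6 * (b : ℝ) + Real.sqrt (2 * b))
        ≤ Real.sqrt
            (2 * (b : ℝ) * ((2 * (b : ℝ) + 2 * (⌊Real.sqrt (2 * b)⌋ : ℝ) + 1)
                / (2 * (b : ℝ) + (⌊Real.sqrt (2 * b)⌋ : ℝ))) ^ 2 / (2 * b)) ∧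
    Real.sqrt
        (2 * (b : ℝ) * ((2 * (b : ℝ) + 2 * (⌊Real.sqrt (2 * b)⌋ : ℝ) + 1)
            / (2 * (b : ℝ) + (⌊Real.sqrt (2 * b)⌋ : ℝ))) ^ 2 / (2 * b))
      = (2 * (b : ℝ) + 2 * (⌊Real.sqrt (2 * b)⌋ : ℝ) + 1)
          / (2 * (b : ℝ) + (⌊Real.sqrt (2 * b)⌋ : ℝ)) := by
  have hb' : (2 : ℝ) ≤ b := by exact_mod_cast hb
  set s := Real.sqrt (2 * b)
  have hs2 : s ^ 2 = 2 * b := Real.sq_sqrt (by positivity)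
  have hs : 2 ≤ s := Real.le_sqrt_of_sq_le (by linarith)
  have hf : (0 : ℝ) ≤ ⌊s⌋ := by exact_mod_cast Int.floor_nonneg.2 (by linarith)
  have hsqrt : ∀ x : ℝ, 0 ≤ x → Real.sqrt (2 * b * x ^ 2 / (2 * b)) = x := fun x hx => by
    rw [mul_div_cancel_left₀ _ (by positivity), Real.sqrt_sq hx]
  rw [hsqrt _ (by positivity)]
  refine ⟨?_, rfl⟩
  have key := div_le_floor_div hs
  rw [hs2] at key
  convert key using 2 <;> ring
end

section
/- Let b ≥ 2 and k ≥ 2 be real numbers with k² ≤ 2b, and let a be a real number with v_b(k) ≤ a ≤ 2b+2k+2, where v_b(k) = 2b·((2b+2k+1)/(2b+k))². Set λ := √(a/(2b)). Then: (i) 2(λ−1) ≤ 1 + (2b+k)λ − (2b+2k+1); (ii) 0 ≤ (2b+k)λ − (2b+2k+1) ≤ a − (2b+2k+1). -/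
/-!
All three inequalities are lower bounds on `λ = √(a/(2b))`. The hypothesis `a ≥ v_b(k)` says
`λ ≥ (2b+2k+1)/(2b+k)`, and this threshold dominates `(2b+2k-2)/(2b+k-2)`, which is what (i) asks
for (because `|k| ≤ b`), and `(2b+k)/(2b)`, which gives `(2b+k)λ ≤ 2bλ² = a` (because `k² ≤ 2b`).
-/

lemma abs_le_of_sq_le_two_mul {b k : ℝ} (hb : 2 ≤ b) (hk : k ^ 2 ≤ 2 * b) : |k| ≤ b :=
  abs_le_of_sq_le_sq (by nlinarith) (by linarith)

lemma le_mul_sqrt_div_of_mul_div_sq_le {a c p q : ℝ} (hc : 0 < c) (hq : 0 < q)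
    (h : c * (p / q) ^ 2 ≤ a) : p ≤ q * √(a / c) := by
  have hsq : (p / q) ^ 2 ≤ a / c := by
    rw [le_div_iff₀ hc]
    linarith
  have hdiv : p / q ≤ √(a / c) :=
    calc p / q ≤ |p / q| := le_abs_self _
      _ = √((p / q) ^ 2) := (Real.sqrt_sq_eq_abs _).symm
      _ ≤ √(a / c) := Real.sqrt_le_sqrt hsq
  rwa [div_le_iff₀' hq] at hdiv

lemma le_mul_of_le_mul_of_mul_le_mul {p q p' q' x : ℝ} (hq : 0 < q) (hq' : 0 ≤ q')
    (hx : p ≤ q * x) (hcross : p' * q ≤ p * q') : p' ≤ q' * x := by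
  refine le_of_mul_le_mul_right ?_ hq
  calc p' * q ≤ p * q' := hcross
    _ ≤ q * x * q' := mul_le_mul_of_nonneg_right hx hq'
    _ = q' * x * q := by ring

theorem stmt13_general (b k a : ℝ) (hb : 2 ≤ b) (hk2 : k ^ 2 ≤ 2 * b)
    (ha1 : 2 * b * ((2 * b + 2 * k + 1) / (2 * b + k)) ^ 2 ≤ a) :
    2 * (Real.sqrt (a / (2 * b)) - 1)
        ≤ 1 + ((2 * b + k) * Real.sqrt (a / (2 * b)) - (2 * b + 2 * k + 1)) ∧
    0 ≤ (2 * b + k) * Real.sqrt (a / (2 * b)) - (2 * b + 2 * k + 1) ∧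
    (2 * b + k) * Real.sqrt (a / (2 * b)) - (2 * b + 2 * k + 1)
        ≤ a - (2 * b + 2 * k + 1) := by
  obtain ⟨hk_lo, hk_hi⟩ := abs_le.mp (abs_le_of_sq_le_two_mul hb hk2)
  have hb0 : 0 < 2 * b := by linarith
  have hm : 0 < 2 * b + k := by linarith
  set l := √(a / (2 * b)) with hl
  have hthreshold : 2 * b + 2 * k + 1 ≤ (2 * b + k) * l :=
    le_mul_sqrt_div_of_mul_div_sq_le hb0 hm ha1
  have hi : 2 * b + 2 * k - 2 ≤ (2 * b + k - 2) * l :=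
    le_mul_of_le_mul_of_mul_le_mul hm (by linarith) hthreshold (by nlinarith)
  have hii : 2 * b + k ≤ 2 * b * l :=
    le_mul_of_le_mul_of_mul_le_mul hm hb0.le hthreshold (by nlinarith)
  have ha : 2 * b * l ^ 2 = a := by
    rw [hl, Real.sq_sqrt (div_nonneg (le_trans (by positivity) ha1) hb0.le)]
    field_simp
  refine ⟨by linarith, by linarith, ?_⟩
  calc (2 * b + k) * l - (2 * b + 2 * k + 1) ≤ 2 * b * l * l - (2 * b + 2 * k + 1) := by
        gcongr
    _ = a - (2 * b + 2 * k + 1) := by rw [← ha]; ring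

/-- Let `b ≥ 2`, `k ≥ 2` be real with `k² ≤ 2b`, and `v_b(k) ≤ a ≤ 2b+2k+2` where
`v_b(k) = 2b·((2b+2k+1)/(2b+k))²`. With `λ = √(a/(2b))`:
(i) `2(λ−1) ≤ 1 + (2b+k)λ − (2b+2k+1)`;
(ii) `0 ≤ (2b+k)λ − (2b+2k+1) ≤ a − (2b+2k+1)`. -/
theorem stmt13 (b k a : ℝ) (hb : 2 ≤ b) (hk : 2 ≤ k) (hk2 : k ^ 2 ≤ 2 * b)
    (ha1 : 2 * b * ((2 * b + 2 * k + 1) / (2 * b + k)) ^ 2 ≤ a)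
    (ha2 : a ≤ 2 * b + 2 * k + 2) :
    2 * (Real.sqrt (a / (2 * b)) - 1)
        ≤ 1 + ((2 * b + k) * Real.sqrt (a / (2 * b)) - (2 * b + 2 * k + 1)) ∧
    0 ≤ (2 * b + k) * Real.sqrt (a / (2 * b)) - (2 * b + 2 * k + 1) ∧
    (2 * b + k) * Real.sqrt (a / (2 * b)) - (2 * b + 2 * k + 1)
        ≤ a - (2 * b + 2 * k + 1) :=
  stmt13_general b k a hb hk2 ha1
end

section
/- Let b ≥ 2 and k ≥ 3 be real numbers, and let a be a real number with 2b+2k+1 ≤ a ≤ 2b+2k+2. Then (2b+k−1)·√(a/(2b)) ≥ a − 2. -/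
/-!
Squaring, the claim becomes the polynomial inequality `2b (a - 2)² ≤ (2b + k - 1)² a`. Its
difference `g(a)` is a concave quadratic in `a`, so on the unit interval `[2b + 2k + 1, 2b + 2k + 2]`
it dominates the chord through its endpoint values, and both of these are nonnegative:
with `u = 2b + k - 1` they equal `u² + k (k - 2) u + k² (k - 1)` and
`(k - 3)(k + 1) u + (k - 1)(k + 1)²`.
-/

section Endpoints

variable {B k : ℝ}

lemma mul_sq_le_at_left_endpoint (hB : 0 < B) (hk : 2 ≤ k) :
    B * (B + 2 * k - 1) ^ 2 ≤ (B + k - 1) ^ 2 * (B + 2 * k + 1) := by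
  have hu : 0 ≤ B + k - 1 := by linarith
  have hk' : 0 ≤ k - 2 := by linarith
  have hdiff : (B + k - 1) ^ 2 * (B + 2 * k + 1) - B * (B + 2 * k - 1) ^ 2 =
      (B + k - 1) ^ 2 + k * (k - 2) * (B + k - 1) + k ^ 2 * (k - 1) := by ring
  have : 0 ≤ (B + k - 1) ^ 2 + k * (k - 2) * (B + k - 1) + k ^ 2 * (k - 1) := by
    have : 0 ≤ k - 1 := by linarith
    positivity
  linarith

lemma mul_sq_le_at_right_endpoint (hB : 0 < B) (hk : 3 ≤ k) :
    B * (B + 2 * k) ^ 2 ≤ (B + k - 1) ^ 2 * (B + 2 * k + 2) := by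
  have hu : 0 ≤ B + k - 1 := by linarith
  have hk3 : 0 ≤ k - 3 := by linarith
  have hk1 : 0 ≤ k - 1 := by linarith
  have hdiff : (B + k - 1) ^ 2 * (B + 2 * k + 2) - B * (B + 2 * k) ^ 2 =
      (k - 3) * (k + 1) * (B + k - 1) + (k - 1) * (k + 1) ^ 2 := by ring
  have : 0 ≤ (k - 3) * (k + 1) * (B + k - 1) + (k - 1) * (k + 1) ^ 2 := by positivity
  linarith

lemma mul_sq_sub_two_le (hB : 0 < B) (hk : 3 ≤ k) {a : ℝ}
    (ha₁ : B + 2 * k + 1 ≤ a) (ha₂ : a ≤ B + 2 * k + 2) :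
    B * (a - 2) ^ 2 ≤ (B + k - 1) ^ 2 * a := by
  have hleft := mul_sq_le_at_left_endpoint hB (by linarith : 2 ≤ k)
  have hright := mul_sq_le_at_right_endpoint hB hk
  -- `g(a) = chord(a) + B (a - a₁)(a₂ - a)`, exact because `a₂ - a₁ = 1`
  have hinterp : (B + k - 1) ^ 2 * a - B * (a - 2) ^ 2 =
      (B + 2 * k + 2 - a) * ((B + k - 1) ^ 2 * (B + 2 * k + 1) - B * (B + 2 * k - 1) ^ 2) +
      (a - (B + 2 * k + 1)) * ((B + k - 1) ^ 2 * (B + 2 * k + 2) - B * (B + 2 * k) ^ 2) +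
      B * (a - (B + 2 * k + 1)) * (B + 2 * k + 2 - a) := by ring
  have : 0 ≤ (B + 2 * k + 2 - a) * ((B + k - 1) ^ 2 * (B + 2 * k + 1) - B * (B + 2 * k - 1) ^ 2) +
      (a - (B + 2 * k + 1)) * ((B + k - 1) ^ 2 * (B + 2 * k + 2) - B * (B + 2 * k) ^ 2) +
      B * (a - (B + 2 * k + 1)) * (B + 2 * k + 2 - a) := by
    have h₁ : 0 ≤ a - (B + 2 * k + 1) := by linarith
    have h₂ : 0 ≤ B + 2 * k + 2 - a := by linarith
    have := sub_nonneg.mpr hleft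
    have := sub_nonneg.mpr hright
    positivity
  linarith

end Endpoints

lemma le_mul_sqrt_div_of_mul_sq_le {B c a x : ℝ} (hB : 0 < B) (hc : 0 ≤ c)
    (h : B * x ^ 2 ≤ c ^ 2 * a) : x ≤ c * √(a / B) := by
  rw [← Real.sqrt_sq hc, ← Real.sqrt_mul (sq_nonneg c)]
  apply Real.le_sqrt_of_sq_le
  rw [mul_div_assoc', le_div_iff₀ hB]
  linarith

/-- Let `b ≥ 2` and `k ≥ 3` be real, and `2b+2k+1 ≤ a ≤ 2b+2k+2`. Then
`(2b+k−1)·√(a/(2b)) ≥ a − 2`. -/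
theorem stmt14 (b k a : ℝ) (hb : 2 ≤ b) (hk : 3 ≤ k)
    (ha1 : 2 * b + 2 * k + 1 ≤ a) (ha2 : a ≤ 2 * b + 2 * k + 2) :
    (2 * b + k - 1) * Real.sqrt (a / (2 * b)) ≥ a - 2 := by
  have hB : (0 : ℝ) < 2 * b := by linarith
  exact le_mul_sqrt_div_of_mul_sq_le hB (by linarith) (mul_sq_sub_two_le hB hk ha1 ha2)
end

section
/- Let b ≥ 2 be an integer and let a be a real number with v_b(2) ≤ a ≤ 2b+6, where v_b(2) = 2b·((2b+5)/(2b+2))². Then −(b+1)·(a−(2b+5)) + (2b²+5b+1)·√(a/(2b)) − (2b²+7b+5) ≥ 0. -/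
/-!
The constant terms cancel, so the left-hand side is `-(b+1)·a + (2b²+5b+1)·t` with
`t = √(a/(2b))`. Since `a ≤ 2b·t²`, it is at least `t·((2b²+5b+1) - 2b(b+1)·t)`, which is
nonnegative as long as `t ≤ (2b²+5b+1)/(2b(b+1))`. The hypothesis `a ≤ 2b+6` gives
`t² ≤ (b+3)/b`, and this is enough because `(2b²+5b+1)² - 4b(b+1)²(b+3) = (b-1)²`.
-/

lemma four_mul_mul_sq_le_sq (b : ℝ) :
    4 * b * (b + 1) ^ 2 * (b + 3) ≤ (2 * b ^ 2 + 5 * b + 1) ^ 2 := by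
  nlinarith [sq_nonneg (b - 1)]

lemma two_mul_mul_add_one_mul_le {b t : ℝ} (hb : 0 < b) (ht : 0 ≤ t)
    (hts : t ^ 2 ≤ (b + 3) / b) :
    2 * b * (b + 1) * t ≤ 2 * b ^ 2 + 5 * b + 1 := by
  have hbt : b * t ^ 2 ≤ b + 3 := by rwa [le_div_iff₀ hb, mul_comm] at hts
  refine (pow_le_pow_iff_left₀ (by positivity) (by positivity) two_ne_zero).mp ?_
  calc (2 * b * (b + 1) * t) ^ 2 = 4 * b * (b + 1) ^ 2 * (b * t ^ 2) := by ring
    _ ≤ 4 * b * (b + 1) ^ 2 * (b + 3) := by gcongr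
    _ ≤ (2 * b ^ 2 + 5 * b + 1) ^ 2 := four_mul_mul_sq_le_sq b

theorem stmt15_general (b : ℤ) (hb : 2 ≤ b) (a : ℝ)
    (ha2 : a ≤ 2 * (b : ℝ) + 6) :
    -((b : ℝ) + 1) * (a - (2 * (b : ℝ) + 5))
        + (2 * (b : ℝ) ^ 2 + 5 * (b : ℝ) + 1) * Real.sqrt (a / (2 * (b : ℝ)))
        - (2 * (b : ℝ) ^ 2 + 7 * (b : ℝ) + 5) ≥ 0 := by
  have hb₀ : (0 : ℝ) < b := by exact_mod_cast (by omega : 0 < b)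
  set t := Real.sqrt (a / (2 * (b : ℝ)))
  have ht : 0 ≤ t := Real.sqrt_nonneg _
  have hat : a ≤ 2 * b * t ^ 2 := by
    have : a / (2 * b) ≤ t ^ 2 := Real.sq_sqrt' ▸ le_max_left _ _
    rwa [div_le_iff₀ (by positivity), mul_comm] at this
  have hts : t ^ 2 ≤ (b + 3) / b := by
    rw [Real.sq_sqrt']
    refine max_le ?_ (by positivity)
    rw [div_le_div_iff₀ (by positivity) hb₀]
    nlinarith
  have hquad := mul_le_mul_of_nonneg_right (two_mul_mul_add_one_mul_le hb₀ ht hts) ht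
  have hlin := mul_le_mul_of_nonneg_left hat (by positivity : (0 : ℝ) ≤ b + 1)
  linarith

/-- Let `b ≥ 2` be an integer and `a` real with `v_b(2) ≤ a ≤ 2b+6`, where
`v_b(2) = 2b·((2b+5)/(2b+2))²`. Then
`−(b+1)·(a−(2b+5)) + (2b²+5b+1)·√(a/(2b)) − (2b²+7b+5) ≥ 0`. -/
theorem stmt15 (b : ℤ) (hb : 2 ≤ b) (a : ℝ)
    (ha1 : 2 * (b : ℝ) * ((2 * (b : ℝ) + 5) / (2 * (b : ℝ) + 2)) ^ 2 ≤ a)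
    (ha2 : a ≤ 2 * (b : ℝ) + 6) :
    -((b : ℝ) + 1) * (a - (2 * (b : ℝ) + 5))
        + (2 * (b : ℝ) ^ 2 + 5 * (b : ℝ) + 1) * Real.sqrt (a / (2 * (b : ℝ)))
        - (2 * (b : ℝ) ^ 2 + 7 * (b : ℝ) + 5) ≥ 0 :=
  stmt15_general b hb a ha2
end

section
/- Let b ≥ 2 be an integer and let a be a real number with v_b(1) ≤ a ≤ α_b, where v_b(1) = 2b·((2b+3)/(2b+1))² and α_b = (b²+2b+√((b²+2b)²−1))/b. Set λ := √(a/(2b)). Then the following three inequalities hold: (1) (2b³+2b²−3b−1)λ + (1−b²)a ≥ 0; (2) −2−2b + (2b³−3b)λ + (1+b−b²)a ≥ 0; (3) −7−4b + b(2b²+2b−1)λ + (2−b²)a ≥ 0. -/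
/-!
Write `a = 2bλ²`. Each of the three expressions is then a quadratic in `λ` with nonpositive
leading coefficient, hence concave, so it is nonnegative on an interval as soon as it is
nonnegative at both ends. The lower bound on `a` says `λ ≥ (2b+3)/(2b+1)`, and since
`√((b²+2b)²−1) ≤ b²+2b` the upper bound gives `a ≤ 2b+4`, i.e. `λ ≤ √((b+2)/b)`. At the lower end
the three values are `(2b+3)(b−1)`, `2b²−b−2` and `2b²+b−7` divided by `(2b+1)²`; at the upper
end `bλ² = b+2` makes the value affine in `λ`, and squaring settles its sign.
-/

open Set

theorem quadratic_nonneg_of_mem_Icc {c₀ c₁ c₂ l h x : ℝ} (hc₂ : c₂ ≤ 0) (hx : x ∈ Icc l h)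
    (hl : 0 ≤ c₀ + c₁ * l + c₂ * l ^ 2) (hh : 0 ≤ c₀ + c₁ * h + c₂ * h ^ 2) :
    0 ≤ c₀ + c₁ * x + c₂ * x ^ 2 := by
  obtain ⟨hlx, hxh⟩ := hx
  rcases (hlx.trans hxh).eq_or_lt with rfl | hlh
  · rwa [le_antisymm hxh hlx]
  · have interpolation : (h - l) * (c₀ + c₁ * x + c₂ * x ^ 2)
        = (h - x) * (c₀ + c₁ * l + c₂ * l ^ 2) + (x - l) * (c₀ + c₁ * h + c₂ * h ^ 2)
          + -c₂ * (h - l) * ((x - l) * (h - x)) := by ring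
    refine nonneg_of_mul_nonneg_right ?_ (sub_pos.mpr hlh)
    rw [interpolation]
    have hl' := sub_nonneg.mpr hlx
    have hh' := sub_nonneg.mpr hxh
    exact add_nonneg (add_nonneg (mul_nonneg hh' hl) (mul_nonneg hl' hh))
      (mul_nonneg (mul_nonneg (neg_nonneg.mpr hc₂) (sub_pos.mpr hlh).le) (mul_nonneg hl' hh'))

def lambdaRange (B : ℝ) : Set ℝ := Icc ((2 * B + 3) / (2 * B + 1)) √((B + 2) / B)

theorem sqrt_div_mem_lambdaRange {B a : ℝ} (hB : 0 < B)
    (ha₁ : 2 * B * ((2 * B + 3) / (2 * B + 1)) ^ 2 ≤ a)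
    (ha₂ : a ≤ (B ^ 2 + 2 * B + √((B ^ 2 + 2 * B) ^ 2 - 1)) / B) :
    √(a / (2 * B)) ∈ lambdaRange B := by
  constructor
  · exact Real.le_sqrt_of_sq_le ((le_div_iff₀ (by positivity)).mpr (by linarith))
  · have hroot : √((B ^ 2 + 2 * B) ^ 2 - 1) ≤ B ^ 2 + 2 * B :=
      Real.sqrt_le_iff.mpr ⟨by positivity, by linarith⟩
    have ha_le : a ≤ 2 * B + 4 := by
      calc a ≤ (B ^ 2 + 2 * B + (B ^ 2 + 2 * B)) / B := ha₂.trans (by gcongr)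
        _ = 2 * B + 4 := by field_simp; ring
    apply Real.sqrt_le_sqrt
    rw [div_le_div_iff₀ (by positivity) hB]
    nlinarith

/-- `hlo` is nonnegativity at the lower end of `lambdaRange B`, cleared of the denominator
`(2B+1)²`; `hhi` is nonnegativity at the upper end, where `Bλ² = B+2`, after squaring. -/
theorem nonneg_of_mem_lambdaRange {B c₀ c₁ c₂ s a : ℝ} (hB : 0 < B) (hc₁ : 0 ≤ c₁) (hc₂ : c₂ ≤ 0)
    (ha : a = 2 * B * s ^ 2) (hs : s ∈ lambdaRange B)
    (hlo : 0 ≤ c₀ * (2 * B + 1) ^ 2 + c₁ * (2 * B + 3) * (2 * B + 1)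
      + 2 * B * c₂ * (2 * B + 3) ^ 2)
    (hhi : (c₀ + 2 * c₂ * (B + 2)) ^ 2 * B ≤ c₁ ^ 2 * (B + 2)) :
    0 ≤ c₀ + c₁ * s + c₂ * a := by
  set u := √((B + 2) / B)
  have hlow : 0 ≤ c₀ + c₁ * ((2 * B + 3) / (2 * B + 1))
      + 2 * B * c₂ * ((2 * B + 3) / (2 * B + 1)) ^ 2 := by
    have hval : c₀ + c₁ * ((2 * B + 3) / (2 * B + 1))
        + 2 * B * c₂ * ((2 * B + 3) / (2 * B + 1)) ^ 2
        = (c₀ * (2 * B + 1) ^ 2 + c₁ * (2 * B + 3) * (2 * B + 1)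
          + 2 * B * c₂ * (2 * B + 3) ^ 2) / (2 * B + 1) ^ 2 := by
      field_simp
    rw [hval]
    positivity
  have hhigh : 0 ≤ c₀ + c₁ * u + 2 * B * c₂ * u ^ 2 := by
    have hu : 2 * B * c₂ * u ^ 2 = 2 * c₂ * (B + 2) := by
      rw [Real.sq_sqrt (by positivity)]
      field_simp
    have hlin : -(c₀ + 2 * c₂ * (B + 2)) ≤ c₁ * u :=
      calc -(c₀ + 2 * c₂ * (B + 2)) ≤ √(c₁ ^ 2 * ((B + 2) / B)) := by
            refine Real.le_sqrt_of_sq_le ?_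
            rw [neg_sq, mul_div_assoc', le_div_iff₀ hB]
            exact hhi
        _ = c₁ * u := by rw [Real.sqrt_mul (sq_nonneg _), Real.sqrt_sq hc₁]
    linarith
  have := quadratic_nonneg_of_mem_Icc (mul_nonpos_of_nonneg_of_nonpos (by positivity) hc₂)
    hs hlow hhigh
  rw [ha]
  linarith

theorem inequality_one {B s a : ℝ} (hB : 2 ≤ B) (ha : a = 2 * B * s ^ 2)
    (hs : s ∈ lambdaRange B) :
    0 ≤ (2 * B ^ 3 + 2 * B ^ 2 - 3 * B - 1) * s + (1 - B ^ 2) * a := by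
  have hlo : 0 ≤ (2 * B + 3) * (B - 1) := by nlinarith
  have hhi : 0 ≤ (B + 2) * (B - 1) ^ 2 := by nlinarith
  simpa using nonneg_of_mem_lambdaRange (c₀ := 0) (by linarith) (by nlinarith) (by nlinarith)
    ha hs (by linarith) (by linarith)

theorem inequality_two {B s a : ℝ} (hB : 2 ≤ B) (ha : a = 2 * B * s ^ 2)
    (hs : s ∈ lambdaRange B) :
    0 ≤ -2 - 2 * B + (2 * B ^ 3 - 3 * B) * s + (1 + B - B ^ 2) * a := by
  have hlo : 0 ≤ 2 * B ^ 2 - B - 2 := by nlinarith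
  have hhi : 0 ≤ B * (B ^ 2 + 2 * B - 4) := by nlinarith
  exact nonneg_of_mem_lambdaRange (by linarith) (by nlinarith) (by nlinarith)
    ha hs (by linarith) (by linarith)

theorem inequality_three {B s a : ℝ} (hB : 2 ≤ B) (ha : a = 2 * B * s ^ 2)
    (hs : s ∈ lambdaRange B) :
    0 ≤ -7 - 4 * B + B * (2 * B ^ 2 + 2 * B - 1) * s + (2 - B ^ 2) * a := by
  have hlo : 0 ≤ 2 * B ^ 2 + B - 7 := by nlinarith
  have hhi : 0 ≤ B * (B ^ 2 + 2 * B - 1) := by nlinarith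
  exact nonneg_of_mem_lambdaRange (by linarith) (by nlinarith) (by nlinarith)
    ha hs (by linarith) (by linarith)

/-- Let `b ≥ 2` be an integer and `a` real with `v_b(1) ≤ a ≤ α_b`, where
`v_b(1) = 2b·((2b+3)/(2b+1))²` and `α_b = (b²+2b+√((b²+2b)²−1))/b`. With `λ = √(a/(2b))`:
(1) `(2b³+2b²−3b−1)λ + (1−b²)a ≥ 0`;
(2) `−2−2b + (2b³−3b)λ + (1+b−b²)a ≥ 0`;
(3) `−7−4b + b(2b²+2b−1)λ + (2−b²)a ≥ 0`. -/
theorem stmt17 (b : ℤ) (hb : 2 ≤ b) (a : ℝ)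
    (ha1 : 2 * (b : ℝ) * ((2 * (b : ℝ) + 3) / (2 * (b : ℝ) + 1)) ^ 2 ≤ a)
    (ha2 : a ≤ ((b : ℝ) ^ 2 + 2 * (b : ℝ)
        + Real.sqrt (((b : ℝ) ^ 2 + 2 * (b : ℝ)) ^ 2 - 1)) / (b : ℝ)) :
    (2 * (b : ℝ) ^ 3 + 2 * (b : ℝ) ^ 2 - 3 * (b : ℝ) - 1) * Real.sqrt (a / (2 * (b : ℝ)))
        + (1 - (b : ℝ) ^ 2) * a ≥ 0 ∧
    -2 - 2 * (b : ℝ) + (2 * (b : ℝ) ^ 3 - 3 * (b : ℝ)) * Real.sqrt (a / (2 * (b : ℝ)))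
        + (1 + (b : ℝ) - (b : ℝ) ^ 2) * a ≥ 0 ∧
    -7 - 4 * (b : ℝ)
        + (b : ℝ) * (2 * (b : ℝ) ^ 2 + 2 * (b : ℝ) - 1) * Real.sqrt (a / (2 * (b : ℝ)))
        + (2 - (b : ℝ) ^ 2) * a ≥ 0 := by
  have hB : (2 : ℝ) ≤ b := by exact_mod_cast hb
  have hB₀ : (0 : ℝ) < b := by linarith
  have ha : a = 2 * b * √(a / (2 * b)) ^ 2 := by
    rw [Real.sq_sqrt (div_nonneg (le_trans (by positivity) ha1) (by positivity))]
    field_simp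
  have hs := sqrt_div_mem_lambdaRange hB₀ ha1 ha2
  exact ⟨inequality_one hB ha hs, inequality_two hB ha hs, inequality_three hB ha hs⟩
end

section
/- Let b ≥ 3 be an integer and let a be a real number with v_b(1) ≤ a ≤ α_b, where v_b(1) = 2b·((2b+3)/(2b+1))² and α_b = (b²+2b+√((b²+2b)²−1))/b. Then (1+4b+2b²)·√(a/(2b)) + (1−b)·a ≥ 8 + 4b. -/
/-!
Put `s = √(a/(2b))`, so that `a = 2bs²`. The inequality becomes `q(s) ≥ 0` for the concave
quadratic `q = gap b`, and the hypotheses say exactly that `s` lies between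
`s₀ = (2b+3)/(2b+1)` and `s₁ = ((b+1)² + r)/(2b(b+1))`, `r = √((b²+2b)²−1)`.
A concave function is nonnegative between two points where it is, and indeed
`(2b+1)² q(s₀) = 2b − 5` while `(2b(b+1))² q(s₁) = 2b(b+1)((4b+3)r − (b+1)(4b²+7b−1))`.
-/

open Real

def gap (b s : ℝ) : ℝ := (2 * b ^ 2 + 4 * b + 1) * s - 2 * b * (b - 1) * s ^ 2 - (8 + 4 * b)

theorem quadratic_nonneg_of_mem_Icc_s18 {p c d x y s : ℝ} (hc : 0 ≤ c) (hs : s ∈ Set.Icc x y)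
    (hx : 0 ≤ p * x - c * x ^ 2 - d) (hy : 0 ≤ p * y - c * y ^ 2 - d) :
    0 ≤ p * s - c * s ^ 2 - d := by
  obtain ⟨hxs, hsy⟩ := hs
  rcases hxs.eq_or_lt with rfl | hxs'
  · exact hx
  have key : (p * s - c * s ^ 2 - d) * (y - x) =
      (p * x - c * x ^ 2 - d) * (y - s) + (p * y - c * y ^ 2 - d) * (s - x)
        + c * (s - x) * (y - s) * (y - x) := by ring
  have hyx : 0 < y - x := by linarith
  refine nonneg_of_mul_nonneg_left ?_ hyx
  rw [key]
  have := mul_nonneg (mul_nonneg (mul_nonneg hc (sub_nonneg.2 hxs)) (sub_nonneg.2 hsy)) hyx.le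
  linarith [mul_nonneg hx (sub_nonneg.2 hsy), mul_nonneg hy (sub_nonneg.2 hxs)]

theorem gap_lower_endpoint {b : ℝ} (hb : 5 / 2 ≤ b) : 0 ≤ gap b ((2 * b + 3) / (2 * b + 1)) := by
  have hpos : 0 < 2 * b + 1 := by linarith
  have h : gap b ((2 * b + 3) / (2 * b + 1)) = (2 * b - 5) / (2 * b + 1) ^ 2 := by
    unfold gap
    field_simp
    ring
  rw [h]
  exact div_nonneg (by linarith) (sq_nonneg _)

theorem sq_sqrt_sq_add_two_mul_sub_one {b : ℝ} (hb : 1 ≤ b) :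
    √((b ^ 2 + 2 * b) ^ 2 - 1) ^ 2 = (b ^ 2 + 2 * b) ^ 2 - 1 :=
  sq_sqrt (by nlinarith)

theorem upper_endpoint_sq {b : ℝ} (hb : 1 ≤ b) :
    ((b + 1) ^ 2 + √((b ^ 2 + 2 * b) ^ 2 - 1)) ^ 2
      = 2 * (b + 1) ^ 2 * (b ^ 2 + 2 * b + √((b ^ 2 + 2 * b) ^ 2 - 1)) := by
  linear_combination sq_sqrt_sq_add_two_mul_sub_one hb

theorem gap_upper_endpoint {b : ℝ} (hb : 2 ≤ b) :
    0 ≤ gap b (((b + 1) ^ 2 + √((b ^ 2 + 2 * b) ^ 2 - 1)) / (2 * b * (b + 1))) := by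
  set r := √((b ^ 2 + 2 * b) ^ 2 - 1)
  have hr2 : r ^ 2 = (b ^ 2 + 2 * b) ^ 2 - 1 := sq_sqrt_sq_add_two_mul_sub_one (by linarith)
  have hm : 0 < 2 * b * (b + 1) := by positivity
  have h : gap b (((b + 1) ^ 2 + r) / (2 * b * (b + 1)))
      = ((4 * b + 3) * r - (b + 1) * (4 * b ^ 2 + 7 * b - 1)) / (2 * b * (b + 1)) := by
    unfold gap
    field_simp
    linear_combination (1 - b) * hr2
  rw [h]
  refine div_nonneg (sub_nonneg.2 ?_) hm.le
  -- the two squares differ by `8b³ + 6b² − 12b − 10`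
  have hsq : ((b + 1) * (4 * b ^ 2 + 7 * b - 1)) ^ 2 ≤ ((4 * b + 3) * r) ^ 2 := by
    have hc : 0 ≤ b - 2 := by linarith
    nlinarith [mul_nonneg (mul_nonneg hc hc) hc, mul_nonneg hc hc]
  exact abs_le_of_sq_le_sq' hsq (by positivity) |>.2

theorem sqrt_div_mem_Icc {b a : ℝ} (hb : 1 ≤ b)
    (ha1 : 2 * b * ((2 * b + 3) / (2 * b + 1)) ^ 2 ≤ a)
    (ha2 : a ≤ (b ^ 2 + 2 * b + √((b ^ 2 + 2 * b) ^ 2 - 1)) / b) :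
    √(a / (2 * b)) ∈ Set.Icc ((2 * b + 3) / (2 * b + 1))
      (((b + 1) ^ 2 + √((b ^ 2 + 2 * b) ^ 2 - 1)) / (2 * b * (b + 1))) := by
  have h2b : 0 < 2 * b := by linarith
  constructor
  · rw [le_sqrt' (by positivity), le_div_iff₀ h2b]
    linarith
  · rw [sqrt_le_left (by positivity), div_pow, upper_endpoint_sq hb]
    calc a / (2 * b) ≤ (b ^ 2 + 2 * b + √((b ^ 2 + 2 * b) ^ 2 - 1)) / b / (2 * b) := by gcongr
      _ = _ := by field_simp

/-- Let `b ≥ 3` be an integer and `a` real with `v_b(1) ≤ a ≤ α_b`, where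
`v_b(1) = 2b·((2b+3)/(2b+1))²` and `α_b = (b²+2b+√((b²+2b)²−1))/b`. Then
`(1+4b+2b²)·√(a/(2b)) + (1−b)·a ≥ 8 + 4b`. -/
theorem stmt18 (b : ℤ) (hb : 3 ≤ b) (a : ℝ)
    (ha1 : 2 * (b : ℝ) * ((2 * (b : ℝ) + 3) / (2 * (b : ℝ) + 1)) ^ 2 ≤ a)
    (ha2 : a ≤ ((b : ℝ) ^ 2 + 2 * (b : ℝ)
        + Real.sqrt (((b : ℝ) ^ 2 + 2 * (b : ℝ)) ^ 2 - 1)) / (b : ℝ)) :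
    (1 + 4 * (b : ℝ) + 2 * (b : ℝ) ^ 2) * Real.sqrt (a / (2 * (b : ℝ)))
        + (1 - (b : ℝ)) * a ≥ 8 + 4 * (b : ℝ) := by
  have hB : (3 : ℝ) ≤ b := by exact_mod_cast hb
  have ha : 0 ≤ a := le_trans (by positivity) ha1
  have hgap : 0 ≤ gap b √(a / (2 * b)) :=
    quadratic_nonneg_of_mem_Icc_s18 (by nlinarith) (sqrt_div_mem_Icc (by linarith) ha1 ha2)
      (gap_lower_endpoint (by linarith)) (gap_upper_endpoint (by linarith))
  have hsq : 2 * b * √(a / (2 * b)) ^ 2 = a := by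
    rw [sq_sqrt (by positivity)]
    field_simp
  unfold gap at hgap
  linear_combination hgap + (1 - (b : ℝ)) * hsq
end

section
/- Let b ≥ 3 be an integer and let a be a real number with β_b ≤ a ≤ γ_b, where β_b = 2b+4+1/(2b(b+1)²) and γ_b = (2b+2)²/(2b). Set λ := √(a/(2b)), so a = 2bλ². Then: (1) 4bλ² − (2b²+4b+1)λ + 2(b²+b−2) ≤ 0, i.e., (2b²+4b+1)λ ≥ 2(a + b² + b − 2); (2) bλ² − (2b+1)λ + (b+1) ≤ 0, i.e., 2((2b+1)λ − (2b+3)) ≥ a − (2b+4). -/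
/-!
Write `λ = √(a/(2b))`. The bounds `β_b ≤ a ≤ γ_b` say exactly that `λ` lies in the interval
`[(2b²+4b+1)/(2b(b+1)), (b+1)/b]`; the constant `1/(2b(b+1)²)` in `β_b` is what makes
`β_b/(2b)` a perfect square, since `(2b²+4b+1)² = 4b(b+1)²(b+2) + 1`.
The quadratic in (2) factors as `(λ - 1)(bλ - (b+1))`. The one in (1) is convex in `λ`, so it
suffices to check it at the endpoints: its values there are `-(b-1)/(2b(b+1)²)` and `(3-b)/b`,
which is where `b ≥ 3` enters.
-/

theorem quadratic_nonpos_of_mem_Icc {c d e p r x : ℝ} (hc : 0 ≤ c) (hpx : p ≤ x) (hxr : x ≤ r)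
    (hp : c * p ^ 2 - d * p + e ≤ 0) (hr : c * r ^ 2 - d * r + e ≤ 0) :
    c * x ^ 2 - d * x + e ≤ 0 := by
  have interpolation : (r - p) * (c * x ^ 2 - d * x + e) =
      (r - x) * (c * p ^ 2 - d * p + e) + (x - p) * (c * r ^ 2 - d * r + e)
        - c * (r - p) * (x - p) * (r - x) := by ring
  rcases hpx.eq_or_lt with rfl | hpx'
  · exact hp
  · have hrx : 0 ≤ r - x := sub_nonneg.2 hxr
    have hxp : 0 ≤ x - p := sub_nonneg.2 hpx
    have : (r - p) * (c * x ^ 2 - d * x + e) ≤ 0 := by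
      rw [interpolation]
      nlinarith [mul_nonneg hrx (neg_nonneg.2 hp), mul_nonneg hxp (neg_nonneg.2 hr),
        mul_nonneg (mul_nonneg (mul_nonneg hc (sub_nonneg.2 (hpx.trans hxr))) hxp) hrx]
    exact nonpos_of_mul_nonpos_right this (by linarith)

theorem sqrt_div_le_of_le_sq_div {B a : ℝ} (hB : 0 < B) (ha : a ≤ (2 * B + 2) ^ 2 / (2 * B)) :
    √(a / (2 * B)) ≤ (B + 1) / B := by
  refine Real.sqrt_le_left (by positivity) |>.2 ?_
  calc a / (2 * B) ≤ (2 * B + 2) ^ 2 / (2 * B) / (2 * B) := by gcongr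
    _ = ((B + 1) / B) ^ 2 := by field_simp

theorem le_sqrt_div_of_le {B a : ℝ} (hB : 0 < B) (ha : 2 * B + 4 + 1 / (2 * B * (B + 1) ^ 2) ≤ a) :
    (2 * B ^ 2 + 4 * B + 1) / (2 * B * (B + 1)) ≤ √(a / (2 * B)) := by
  refine Real.le_sqrt' (by positivity) |>.2 ?_
  calc ((2 * B ^ 2 + 4 * B + 1) / (2 * B * (B + 1))) ^ 2
      = (2 * B + 4 + 1 / (2 * B * (B + 1) ^ 2)) / (2 * B) := by field_simp; ring
    _ ≤ a / (2 * B) := by gcongr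

theorem quadratic_nonpos_at_left_endpoint {B : ℝ} (hB : 1 ≤ B) :
    4 * B * ((2 * B ^ 2 + 4 * B + 1) / (2 * B * (B + 1))) ^ 2
      - (2 * B ^ 2 + 4 * B + 1) * ((2 * B ^ 2 + 4 * B + 1) / (2 * B * (B + 1)))
      + 2 * (B ^ 2 + B - 2) ≤ 0 := by
  have hB0 : 0 < B := by linarith
  have hvalue : 4 * B * ((2 * B ^ 2 + 4 * B + 1) / (2 * B * (B + 1))) ^ 2
      - (2 * B ^ 2 + 4 * B + 1) * ((2 * B ^ 2 + 4 * B + 1) / (2 * B * (B + 1)))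
      + 2 * (B ^ 2 + B - 2) = -((B - 1) / (2 * B * (B + 1) ^ 2)) := by
    field_simp; ring
  rw [hvalue, neg_nonpos]
  exact div_nonneg (by linarith) (by positivity)

theorem quadratic_nonpos_at_right_endpoint {B : ℝ} (hB : 3 ≤ B) :
    4 * B * ((B + 1) / B) ^ 2 - (2 * B ^ 2 + 4 * B + 1) * ((B + 1) / B)
      + 2 * (B ^ 2 + B - 2) ≤ 0 := by
  have hB0 : 0 < B := by linarith
  have hvalue : 4 * B * ((B + 1) / B) ^ 2 - (2 * B ^ 2 + 4 * B + 1) * ((B + 1) / B)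
      + 2 * (B ^ 2 + B - 2) = (3 - B) / B := by
    field_simp; ring
  rw [hvalue]
  exact div_nonpos_of_nonpos_of_nonneg (by linarith) hB0.le

/-- Let `b ≥ 3` be an integer and `a` real with `β_b ≤ a ≤ γ_b`, where
`β_b = 2b+4+1/(2b(b+1)²)` and `γ_b = (2b+2)²/(2b)`. With `λ = √(a/(2b))`:
(1) `4bλ² − (2b²+4b+1)λ + 2(b²+b−2) ≤ 0`, i.e. `(2b²+4b+1)λ ≥ 2(a+b²+b−2)`;
(2) `bλ² − (2b+1)λ + (b+1) ≤ 0`, i.e. `2((2b+1)λ − (2b+3)) ≥ a − (2b+4)`. -/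
theorem stmt19 (b : ℤ) (hb : 3 ≤ b) (a : ℝ)
    (ha1 : 2 * (b : ℝ) + 4 + 1 / (2 * (b : ℝ) * ((b : ℝ) + 1) ^ 2) ≤ a)
    (ha2 : a ≤ (2 * (b : ℝ) + 2) ^ 2 / (2 * (b : ℝ))) :
    (4 * (b : ℝ) * Real.sqrt (a / (2 * (b : ℝ))) ^ 2
        - (2 * (b : ℝ) ^ 2 + 4 * (b : ℝ) + 1) * Real.sqrt (a / (2 * (b : ℝ)))
        + 2 * ((b : ℝ) ^ 2 + (b : ℝ) - 2) ≤ 0 ∧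
      (2 * (b : ℝ) ^ 2 + 4 * (b : ℝ) + 1) * Real.sqrt (a / (2 * (b : ℝ)))
        ≥ 2 * (a + (b : ℝ) ^ 2 + (b : ℝ) - 2)) ∧
    ((b : ℝ) * Real.sqrt (a / (2 * (b : ℝ))) ^ 2
        - (2 * (b : ℝ) + 1) * Real.sqrt (a / (2 * (b : ℝ))) + ((b : ℝ) + 1) ≤ 0 ∧
      2 * ((2 * (b : ℝ) + 1) * Real.sqrt (a / (2 * (b : ℝ))) - (2 * (b : ℝ) + 3))
        ≥ a - (2 * (b : ℝ) + 4)) := by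
  have hb3 : (3 : ℝ) ≤ b := by exact_mod_cast hb
  have hb0 : (0 : ℝ) < b := by linarith
  have ha0 : 0 ≤ a := le_trans (by positivity) ha1
  set l := √(a / (2 * (b : ℝ)))
  have ha : a = 2 * b * l ^ 2 := by
    rw [Real.sq_sqrt (by positivity)]
    field_simp
  have hlow := le_sqrt_div_of_le hb0 ha1
  have hup := sqrt_div_le_of_le_sq_div hb0 ha2
  have one_le : 1 ≤ l := by
    refine le_trans ?_ hlow
    rw [one_le_div (by positivity)]
    nlinarith
  have h1 : 4 * (b : ℝ) * l ^ 2 - (2 * b ^ 2 + 4 * b + 1) * l + 2 * (b ^ 2 + b - 2) ≤ 0 :=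
    quadratic_nonpos_of_mem_Icc (by positivity) hlow hup
      (quadratic_nonpos_at_left_endpoint (by linarith)) (quadratic_nonpos_at_right_endpoint hb3)
  have h2 : (b : ℝ) * l ^ 2 - (2 * b + 1) * l + (b + 1) ≤ 0 := by
    have hfactor : (b : ℝ) * l ^ 2 - (2 * b + 1) * l + (b + 1) = (l - 1) * (b * l - (b + 1)) := by
      ring
    rw [hfactor]
    refine mul_nonpos_of_nonneg_of_nonpos (by linarith) ?_
    have hbl : b * l ≤ b + 1 := (le_div_iff₀' hb0).1 hup
    linarith
  refine ⟨⟨h1, ?_⟩, h2, ?_⟩ <;> rw [ha] <;> linarith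
end
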